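/- Let f(w) = g(w) + w·a₁ + a₀ be a slice regular function on B_R ⊂ ℍ with g having all real coefficients and at least one of a₀, a₁ non-real. Then f has no spherical zeros, i.e., there is no non-real α with the entire sphere S_α contained in the zero set of f. -/

import Mathlib

noncomputable section

/-- The real quaternions. -/
abbrev Quat := Quaternion ℝ

/-- Evaluation of a quaternionic power series with right coefficients `a` at `q`:
`f(q) = Σᵢ qⁱ aᵢ` (the sum is `0` by convention if the series does not converge). -/
def pev (a : ℕ → Quat) (q : Quat) : Quat := ∑' i, q ^ i * a i

/-- The power series with coefficients `a` converges on the open ball of radius `R`. -/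
def ConvOn (a : ℕ → Quat) (R : ℝ) : Prop :=
  ∀ q : Quat, ‖q‖ < R → Summable fun i => q ^ i * a i

/-- Coefficients of the star product `f * g` (convolution of coefficients). -/
def scoef (a b : ℕ → Quat) : ℕ → Quat :=
  fun k => ∑ p ∈ Finset.HasAntidiagonal.antidiagonal k, a p.1 * b p.2

/-- Coefficients of the conjugate series `conj f`. -/
def cconj (a : ℕ → Quat) : ℕ → Quat := fun i => star (a i)

/-- Coefficients of the normal (symmetrized) series `N(f) = f * conj f`. -/
def Ncoef (a : ℕ → Quat) : ℕ → Quat := scoef a (cconj a)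

/-- The conjugacy class of `α`: quaternions with the same trace and the same norm. -/
def Sset (α : Quat) : Set Quat := {x | x + star x = α + star α ∧ ‖x‖ = ‖α‖}

/-- The characteristic polynomial of `α`, evaluated at `q`:
`Δ_α(q) = q² - q·tr(α) + |α|²`. -/
def Δev (α q : Quat) : Quat := q ^ 2 - q * (α + star α) + algebraMap ℝ Quat (‖α‖ ^ 2)

/-- Coefficients of the linear polynomial `w - α`. -/
def lin (α : Quat) : ℕ → Quat := fun k => if k = 0 then -α else if k = 1 then 1 else 0

/-- Zero set of the series `a` in the ball of radius `R`. -/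
def Vset (a : ℕ → Quat) (R : ℝ) : Set Quat := {q | ‖q‖ < R ∧ pev a q = 0}

/-!
Every `x ∈ S_α` satisfies `x² = t x - n` with `t = 2 Re α`, `n = |α|²` real, so `xⁱ = cᵢ + dᵢ x`
with real `cᵢ, dᵢ` independent of `x`, and `f(x) = U + x V` with `U = Σ cᵢ aᵢ`, `V = Σ dᵢ aᵢ`.
Vanishing at the two distinct points `α, ᾱ` of the sphere forces `U = V = 0`. Since `c₀ = d₁ = 1`,
`c₁ = d₀ = 0` and `aᵢ` is real for `i ≥ 2`, the imaginary parts of `U` and `V` are those of `a₀`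
and `a₁`, which therefore are both real.
-/

open Quaternion

def powCoeff (t n : ℝ) : ℕ → ℝ × ℝ
  | 0 => (1, 0)
  | i + 1 => (-n * (powCoeff t n i).2, (powCoeff t n i).1 + t * (powCoeff t n i).2)

theorem pow_eq_powCoeff {t n : ℝ} {x : Quat} (hx : x ^ 2 = t • x - n • 1) (i : ℕ) :
    x ^ i = (powCoeff t n i).1 • 1 + (powCoeff t n i).2 • x := by
  induction i with
  | zero => simp [powCoeff]
  | succ i ih =>
    rw [pow_succ, ih, add_mul, smul_mul_assoc, smul_mul_assoc, one_mul, ← sq, hx]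
    simp only [powCoeff]
    module

theorem sq_eq_of_mem_Sset {α x : Quat} (hx : x ∈ Sset α) :
    x ^ 2 = (2 * α.re) • x - (‖α‖ ^ 2) • 1 := by
  obtain ⟨htr, hnorm⟩ := hx
  have hnormSq : star x * x = (‖α‖ ^ 2) • 1 := by
    rw [star_mul_self, normSq_eq_norm_mul_self, hnorm, ← sq, ← coe_mul_eq_smul, mul_one]
  calc x ^ 2 = (x + star x) * x - star x * x := by noncomm_ring
    _ = (2 * α.re) • x - (‖α‖ ^ 2) • 1 := by
      rw [htr, Quaternion.self_add_star', coe_mul_eq_smul, hnormSq]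

theorem star_mem_Sset (α : Quat) : star α ∈ Sset α :=
  ⟨by rw [star_star, add_comm], Quaternion.norm_star α⟩

section RealCoordinates

variable {f : ℕ → Quat} {c d : ℕ → ℝ}

theorem pow_mul_eq_smul_add {x : Quat} (hpow : ∀ i, x ^ i = c i • 1 + d i • x) (i : ℕ) :
    x ^ i * f i = c i • f i + x * (d i • f i) := by
  rw [hpow, add_mul, smul_mul_assoc, smul_mul_assoc, one_mul, mul_smul_comm]

theorem summable_smul_of_pow_eq {x y : Quat} (hxy : x ≠ y)
    (hx : ∀ i, x ^ i = c i • 1 + d i • x) (hy : ∀ i, y ^ i = c i • 1 + d i • y)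
    (hfx : Summable fun i => x ^ i * f i) (hfy : Summable fun i => y ^ i * f i) :
    (Summable fun i => c i • f i) ∧ Summable fun i => d i • f i := by
  have hd : Summable fun i => d i • f i := by
    refine ((hfx.sub hfy).mul_left (x - y)⁻¹).congr fun i => ?_
    rw [pow_mul_eq_smul_add hx, pow_mul_eq_smul_add hy, add_sub_add_left_eq_sub, ← sub_mul, ← mul_assoc,
      inv_mul_cancel₀ (sub_ne_zero.mpr hxy), one_mul]
  refine ⟨(hfx.sub (hd.mul_left x)).congr fun i => ?_, hd⟩
  rw [pow_mul_eq_smul_add hx, add_sub_cancel_right]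

theorem pev_eq_of_pow_eq {x : Quat} (hpow : ∀ i, x ^ i = c i • 1 + d i • x)
    (hc : Summable fun i => c i • f i) (hd : Summable fun i => d i • f i) :
    pev f x = (∑' i, c i • f i) + x * ∑' i, d i • f i := by
  rw [pev, tsum_congr (pow_mul_eq_smul_add hpow), hc.tsum_add (hd.mul_left x), tsum_mul_left]

theorem hasSum_smul_zero_of_pev_eq_zero {x y : Quat} (hxy : x ≠ y)
    (hx : ∀ i, x ^ i = c i • 1 + d i • x) (hy : ∀ i, y ^ i = c i • 1 + d i • y)
    (hfx : Summable fun i => x ^ i * f i) (hfy : Summable fun i => y ^ i * f i)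
    (hx0 : pev f x = 0) (hy0 : pev f y = 0) :
    HasSum (fun i => c i • f i) 0 ∧ HasSum (fun i => d i • f i) 0 := by
  obtain ⟨hc, hd⟩ := summable_smul_of_pow_eq hxy hx hy hfx hfy
  rw [pev_eq_of_pow_eq hx hc hd] at hx0
  rw [pev_eq_of_pow_eq hy hc hd] at hy0
  have hD : ∑' i, d i • f i = 0 := by
    have : (x - y) * ∑' i, d i • f i = 0 := by
      rw [sub_mul, ← add_sub_add_left_eq_sub, hx0, hy0, sub_zero]
    exact (mul_eq_zero.mp this).resolve_left (sub_ne_zero.mpr hxy)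
  rw [hD, mul_zero, add_zero] at hx0
  exact ⟨hx0 ▸ hc.hasSum, hD ▸ hd.hasSum⟩

theorem im_eq_zero_of_hasSum_smul_zero (hs : HasSum (fun i => c i • f i) 0)
    {k : ℕ} (hk : c k ≠ 0) (hreal : ∀ i ≠ k, c i = 0 ∨ (f i).im = 0) : (f k).im = 0 := by
  have him : HasSum (fun i => c i • (f i).im) 0 := by
    simpa [Function.comp_def] using hs.map (AddMonoidHom.mk' im im_add) continuous_im
  have hsingle := hasSum_single (f := fun i => c i • (f i).im) k fun i hi => by
    rcases hreal i hi with h | h <;> simp [h]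
  exact (smul_eq_zero.mp (hsingle.unique him)).resolve_left hk

end RealCoordinates

theorem stmt9_general (f : ℕ → Quat) (R : ℝ) (hf : ConvOn f R)
    (hreal : ∀ i, 2 ≤ i → (f i).im = 0) (hnr : (f 0).im ≠ 0 ∨ (f 1).im ≠ 0) :
    ¬∃ α : Quat, ‖α‖ < R ∧ α.im ≠ 0 ∧ ∀ x ∈ Sset α, pev f x = 0 := by
  rintro ⟨α, hαR, hαim, hz⟩
  have hα : α ∈ Sset α := ⟨rfl, rfl⟩
  have hne : α ≠ star α := fun h => hαim (by rw [star_eq_self.mp h.symm, im_coe])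
  obtain ⟨hc, hd⟩ := hasSum_smul_zero_of_pev_eq_zero hne
    (pow_eq_powCoeff (sq_eq_of_mem_Sset hα))
    (pow_eq_powCoeff (sq_eq_of_mem_Sset (star_mem_Sset α)))
    (hf α hαR) (hf _ ((Quaternion.norm_star α).trans_lt hαR)) (hz α hα) (hz _ (star_mem_Sset α))
  rcases hnr with h0 | h1
  · refine h0 (im_eq_zero_of_hasSum_smul_zero hc (by simp [powCoeff]) fun i hi => ?_)
    rcases i with _ | _ | i <;> simp_all [powCoeff]
  · refine h1 (im_eq_zero_of_hasSum_smul_zero hd (by simp [powCoeff]) fun i hi => ?_)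
    rcases i with _ | _ | i <;> simp_all [powCoeff]

/-- If `f = g + w·a₁ + a₀` with `g` having real coefficients (here: all coefficients
`f i` for `i ≥ 2` are real) and at least one of `a₀ = f 0`, `a₁ = f 1` non-real,
then `f` has no spherical zeros. -/
theorem stmt9 (f : ℕ → Quat) (R : ℝ) (hR : 0 < R) (hf : ConvOn f R)
    (hreal : ∀ i, 2 ≤ i → (f i).im = 0) (hnr : (f 0).im ≠ 0 ∨ (f 1).im ≠ 0) :
    ¬∃ α : Quat, ‖α‖ < R ∧ α.im ≠ 0 ∧ ∀ x ∈ Sset α, pev f x = 0 :=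
  stmt9_general f R hf hreal hnr
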